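/- arXiv:cs/0507052 — 4 statements merged into one kernel-verified Lean document; each statement's English description precedes it below -/
import Mathlib

section
/- Over the binary alphabet Σ = {0,1}, the set of minimal forbidden words of the language L of unique Eulerian trails is given by the regular expression 001⁺0 + 01⁺00 + 110⁺1 + 10⁺11; that is, MFW(L) = { 0·0·1ⁿ·0 : n ≥ 1 } ∪ { 0·1ⁿ·0·0 : n ≥ 1 } ∪ { 1·1·0ⁿ·1 : n ≥ 1 } ∪ { 1·0ⁿ·1·1 : n ≥ 1 }. -/
def Lp {α : Type*} : Set (List α) :=
  {t | ∃ (u v w y : List α) (a b : α),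
    t = u ++ [a] ++ w ++ [a] ++ y ++ [b] ++ v ∧
    b ∈ a :: w ∧ (w ++ [a]).head? ≠ (y ++ [b]).head?}

def MFW {α : Type*} (L : Set (List α)) : Set (List α) :=
  {r | r ∉ L ∧ ∀ s p q : List α, r = p ++ s ++ q → s ≠ r → s ∈ L}

/-- aa (!a)^m a -/
def fam1 (a : Bool) (m : ℕ) : List Bool := [a, a] ++ List.replicate m (!a) ++ [a]
/-- a (!a)^m aa -/
def fam2 (a : Bool) (m : ℕ) : List Bool := [a] ++ List.replicate m (!a) ++ [a, a]

def Bad (w : List Bool) : Prop :=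
  ∃ b m, 1 ≤ m ∧ (fam1 b m <:+: w ∨ fam2 b m <:+: w)

lemma lp_ext {t : List Bool} (p q : List Bool) (h : t ∈ Lp) : p ++ t ++ q ∈ Lp := by
  obtain ⟨u, v, w, y, a, b, rfl, hb, hne⟩ := h
  exact ⟨p ++ u, v ++ q, w, y, a, b, by simp, hb, hne⟩

lemma fam1_mem (a : Bool) (m : ℕ) (hm : 1 ≤ m) : fam1 a m ∈ Lp := by
  obtain ⟨m, rfl⟩ := Nat.exists_eq_add_of_le hm
  refine ⟨[], [], [], List.replicate (1 + m) (!a), a, a, by simp [fam1], by simp, ?_⟩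
  simp [List.replicate_succ, Nat.add_comm 1 m]

lemma fam2_mem (a : Bool) (m : ℕ) (hm : 1 ≤ m) : fam2 a m ∈ Lp := by
  obtain ⟨m, rfl⟩ := Nat.exists_eq_add_of_le hm
  refine ⟨[], [], List.replicate (1 + m) (!a), [], a, a, by simp [fam2], by simp, ?_⟩
  simp [List.replicate_succ, Nat.add_comm 1 m]

lemma rev_fam1 (a : Bool) (m : ℕ) : (fam1 a m).reverse = fam2 a m := by
  simp [fam1, fam2]

lemma rev_fam2 (a : Bool) (m : ℕ) : (fam2 a m).reverse = fam1 a m := by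
  simp [fam1, fam2]

lemma split_rep (c : Bool) : ∀ l : List Bool,
    ∃ j l', l = List.replicate j c ++ l' ∧ (l' = [] ∨ ∃ t, l' = (!c) :: t) := by
  intro l
  induction l with
  | nil => exact ⟨0, [], by simp, Or.inl rfl⟩
  | cons x xs ih =>
    obtain ⟨j, l', h1, h2⟩ := ih
    by_cases hx : x = c
    · exact ⟨j + 1, l', by simp [List.replicate_succ, h1, hx], h2⟩
    · have hx' : x = !c := by revert hx; cases x <;> cases c <;> simp
      exact ⟨0, x :: xs, by simp, Or.inr ⟨xs, by rw [hx']⟩⟩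

lemma bridge_core (b : Bool) (x1 x3 x4 : List Bool) (k : ℕ) (hk : 2 ≤ k) :
    ∃ m, 1 ≤ m ∧ fam1 b m <:+: x1 ++ List.replicate k b ++ [!b] ++ x3 ++ [b] ++ x4 := by
  obtain ⟨k', rfl⟩ := Nat.exists_eq_add_of_le hk
  obtain ⟨p, r, hx3, hr⟩ := split_rep (!b) x3
  have hrep : List.replicate (2 + k') b = List.replicate k' b ++ [b, b] := by
    rw [Nat.add_comm, List.replicate_add]; rfl
  rcases hr with rfl | ⟨t, rfl⟩
  · refine ⟨p + 1, by omega, x1 ++ List.replicate k' b, x4, ?_⟩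
    simp only [fam1, hx3, hrep, List.replicate_succ, List.append_assoc, List.cons_append,
      List.nil_append]
  · refine ⟨p + 1, by omega, x1 ++ List.replicate k' b, t ++ [b] ++ x4, ?_⟩
    have hb : (!!b) = b := Bool.not_not b
    simp only [fam1, hx3, hrep, hb, List.replicate_succ, List.append_assoc, List.cons_append,
      List.nil_append]

lemma bridge1 (b : Bool) (x1 x2 x3 x4 : List Bool) :
    ∃ m, 1 ≤ m ∧ fam1 b m <:+: x1 ++ [b, b] ++ x2 ++ [!b] ++ x3 ++ [b] ++ x4 := by
  obtain ⟨j, l', hx2, hl⟩ := split_rep b x2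
  have hrep : ([b, b] : List Bool) ++ List.replicate j b = List.replicate (2 + j) b := by
    rw [List.replicate_add]; rfl
  rcases hl with rfl | ⟨t, rfl⟩
  · have e : x1 ++ [b, b] ++ x2 ++ [!b] ++ x3 ++ [b] ++ x4
        = x1 ++ List.replicate (2 + j) b ++ [!b] ++ x3 ++ [b] ++ x4 := by
      simp [hx2, ← hrep, List.append_assoc]
    rw [e]
    exact bridge_core b x1 x3 x4 (2 + j) (by omega)
  · have e : x1 ++ [b, b] ++ x2 ++ [!b] ++ x3 ++ [b] ++ x4
        = x1 ++ List.replicate (2 + j) b ++ [!b] ++ (t ++ [!b] ++ x3) ++ [b] ++ x4 := by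
      simp [hx2, ← hrep, List.append_assoc]
    rw [e]
    exact bridge_core b x1 (t ++ [!b] ++ x3) x4 (2 + j) (by omega)

lemma bridge2 (b : Bool) (x1 x2 x3 x4 : List Bool) :
    ∃ m, 1 ≤ m ∧ fam2 b m <:+: x1 ++ [b] ++ x2 ++ [!b] ++ x3 ++ [b, b] ++ x4 := by
  obtain ⟨m, hm, h⟩ := bridge1 b x4.reverse x3.reverse x2.reverse x1.reverse
  refine ⟨m, hm, ?_⟩
  have e : x4.reverse ++ [b, b] ++ x3.reverse ++ [!b] ++ x2.reverse ++ [b] ++ x1.reverse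
      = (x1 ++ [b] ++ x2 ++ [!b] ++ x3 ++ [b, b] ++ x4).reverse := by
    simp [List.reverse_append, List.append_assoc]
  rw [e, ← rev_fam2 b m] at h
  exact List.reverse_infix.mp h

lemma bool_ne (x y : Bool) (h : x ≠ y) : y = !x := by
  cases x <;> cases y <;> simp_all

lemma badOf1 {c : Bool} {w : List Bool} (h : ∃ m, 1 ≤ m ∧ fam1 c m <:+: w) : Bad w := by
  obtain ⟨m, hm, h⟩ := h; exact ⟨c, m, hm, Or.inl h⟩

lemma badOf2 {c : Bool} {w : List Bool} (h : ∃ m, 1 ≤ m ∧ fam2 c m <:+: w) : Bad w := by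
  obtain ⟨m, hm, h⟩ := h; exact ⟨c, m, hm, Or.inr h⟩

lemma lp_bad {t : List Bool} (ht : t ∈ Lp) : Bad t := by
  obtain ⟨u, v, w₁, y, a, b, rfl, hb, hne⟩ := ht
  cases w₁ with
  | nil =>
    simp only [List.mem_singleton] at hb
    cases y with
    | nil =>
      simp only [List.nil_append, List.head?_cons] at hne
      exact absurd (congrArg some hb.symm) hne
    | cons d y' =>
      simp only [List.nil_append, List.cons_append, List.head?_cons, ne_eq,
        Option.some.injEq] at hne
      have hd : d = !a := bool_ne a d hne
      have e : u ++ [a] ++ ([] : List Bool) ++ [a] ++ (d :: y') ++ [b] ++ v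
          = u ++ [a, a] ++ [] ++ [!a] ++ y' ++ [a] ++ v := by
        simp [hd, hb, List.append_assoc]
      rw [e]
      exact badOf1 (bridge1 a u [] y' v)
  | cons c w₁' =>
    simp only [List.mem_cons] at hb
    cases y with
    | nil =>
      simp only [List.cons_append, List.head?_cons, List.nil_append, ne_eq,
        Option.some.injEq] at hne
      have hbc : b = !c := bool_ne c b hne
      by_cases hc : c = a
      · subst hc
        have hbmem : (!c) ∈ w₁' := by
          rcases hb with h | h | h
          · rw [h] at hbc; simp at hbc
          · rw [h] at hbc; simp at hbc
          · rwa [hbc] at h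
        obtain ⟨s, t, rfl⟩ := List.append_of_mem hbmem
        have e : u ++ [c] ++ (c :: (s ++ (!c) :: t)) ++ [c] ++ ([] : List Bool) ++ [b] ++ v
            = u ++ [c, c] ++ s ++ [!c] ++ t ++ [c] ++ ((!c) :: v) := by
          simp [hbc, List.append_assoc]
        rw [e]
        exact badOf1 (bridge1 c u s t ((!c) :: v))
      · have hca : c = !a := bool_ne a c (fun h => hc h.symm)
        subst hca
        have hba : b = a := by rw [hbc]; simp
        have e : u ++ [a] ++ ((!a) :: w₁') ++ [a] ++ ([] : List Bool) ++ [b] ++ v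
            = u ++ [a] ++ [] ++ [!a] ++ w₁' ++ [a, a] ++ v := by
          simp [hba, List.append_assoc]
        rw [e]
        exact badOf2 (bridge2 a u [] w₁' v)
    | cons d y' =>
      simp only [List.cons_append, List.head?_cons, ne_eq, Option.some.injEq] at hne
      by_cases hc : c = a
      · subst hc
        have hd : d = !c := bool_ne c d hne
        by_cases hmem : (!c) ∈ w₁'
        · obtain ⟨s, t, rfl⟩ := List.append_of_mem hmem
          have e : u ++ [c] ++ (c :: (s ++ (!c) :: t)) ++ [c] ++ (d :: y') ++ [b] ++ v
              = u ++ [c, c] ++ s ++ [!c] ++ t ++ [c] ++ ((!c) :: (y' ++ [b] ++ v)) := by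
            simp [hd, List.append_assoc]
          rw [e]
          exact badOf1 (bridge1 c u s t ((!c) :: (y' ++ [b] ++ v)))
        · have hba : b = c := by
            rcases hb with h | h | h
            · exact h
            · exact h
            · by_cases hb' : b = c
              · exact hb'
              · rw [bool_ne c b (fun hh => hb' hh.symm)] at h
                exact absurd h hmem
          have e : u ++ [c] ++ (c :: w₁') ++ [c] ++ (d :: y') ++ [b] ++ v
              = u ++ [c, c] ++ (w₁' ++ [c]) ++ [!c] ++ y' ++ [c] ++ v := by
            simp [hd, hba, List.append_assoc]
          rw [e]
          exact badOf1 (bridge1 c u (w₁' ++ [c]) y' v)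
      · have hca : c = !a := bool_ne a c (fun h => hc h.symm)
        subst hca
        have hd : d = a := by
          have h2 := bool_ne (!a) d hne
          simpa using h2
        have e : u ++ [a] ++ ((!a) :: w₁') ++ [a] ++ (d :: y') ++ [b] ++ v
            = u ++ [a] ++ [] ++ [!a] ++ w₁' ++ [a, a] ++ (y' ++ [b] ++ v) := by
          simp [hd, List.append_assoc]
        rw [e]
        exact badOf2 (bridge2 a u [] w₁' (y' ++ [b] ++ v))

lemma fam1_length (b : Bool) (m : ℕ) : (fam1 b m).length = m + 3 := by simp [fam1]
lemma fam2_length (b : Bool) (m : ℕ) : (fam2 b m).length = m + 3 := by simp [fam2]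

lemma infix_get {f w : List Bool} (h : f <:+: w) :
    ∃ s, s + f.length ≤ w.length ∧ ∀ t, t < f.length → w[s + t]? = f[t]? := by
  obtain ⟨p, q, rfl⟩ := h
  refine ⟨p.length, by simp, fun t ht => ?_⟩
  rw [List.append_assoc, List.getElem?_append_right (by omega)]
  simp only [Nat.add_sub_cancel_left]
  exact List.getElem?_append_left ht

lemma C1_get (a : Bool) (n p : ℕ) (hp : p < n + 2) :
    ([a] ++ List.replicate n (!a) ++ [a])[p]? = some (if p = 0 ∨ p = n + 1 then a else !a) := by
  rcases p with _ | p
  · rw [if_pos (Or.inl rfl)]; simp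
  · rw [List.append_assoc, List.getElem?_append_right (by simp)]
    simp only [List.length_singleton, Nat.add_sub_cancel]
    by_cases hp2 : p < n
    · rw [if_neg (by omega), List.getElem?_append_left (by simpa), List.getElem?_replicate,
        if_pos hp2]
    · have hpn : p = n := by omega
      subst hpn
      rw [if_pos (Or.inr rfl), List.getElem?_append_right (by simp)]
      simp

lemma C2_get (a : Bool) (n p : ℕ) (hp : p < n + 2) :
    ([a, a] ++ List.replicate n (!a))[p]? = some (if p ≤ 1 then a else !a) := by
  by_cases h1 : p ≤ 1
  · rw [if_pos h1, List.getElem?_append_left (by simp; omega)]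
    interval_cases p <;> simp
  · rw [if_neg h1, List.getElem?_append_right (by simp; omega), List.getElem?_replicate,
      if_pos (by simp; omega)]

lemma C3_get (a : Bool) (n p : ℕ) (hp : p < n + 2) :
    (List.replicate n (!a) ++ [a, a])[p]? = some (if p < n then !a else a) := by
  by_cases h1 : p < n
  · rw [if_pos h1, List.getElem?_append_left (by simpa), List.getElem?_replicate, if_pos h1]
  · rw [if_neg h1, List.getElem?_append_right (by simp; omega)]
    simp only [List.length_replicate]
    have : p - n = 0 ∨ p - n = 1 := by omega
    rcases this with h | h <;> rw [h] <;> simp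

lemma fam1_get (b : Bool) (m t : ℕ) (ht : t < m + 3) :
    (fam1 b m)[t]? = some (if t ≤ 1 ∨ t = m + 2 then b else !b) := by
  unfold fam1
  by_cases h2 : t = m + 2
  · subst h2
    rw [if_pos (Or.inr rfl), List.getElem?_append_right (by simp), ]
    simp
  · rw [List.getElem?_append_left (by simp; omega)]
    have := C2_get b m t (by omega)
    rw [this]
    by_cases h1 : t ≤ 1
    · rw [if_pos h1, if_pos (Or.inl h1)]
    · rw [if_neg h1, if_neg (by omega)]

lemma fam2_get (b : Bool) (m t : ℕ) (ht : t < m + 3) :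
    (fam2 b m)[t]? = some (if t = 0 ∨ m + 1 ≤ t then b else !b) := by
  unfold fam2
  rcases t with _ | t
  · rw [if_pos (Or.inl rfl)]; simp
  · rw [List.append_assoc, List.getElem?_append_right (by simp)]
    simp only [List.length_singleton, Nat.add_sub_cancel]
    rw [C3_get b m t (by omega)]
    by_cases h1 : t < m
    · rw [if_pos h1, if_neg (by omega)]
    · rw [if_neg h1, if_pos (by omega)]

lemma noFam1C1 (a b : Bool) (m n : ℕ) (hm : 1 ≤ m) (hn : 1 ≤ n)
    (h : fam1 b m <:+: [a] ++ List.replicate n (!a) ++ [a]) : False := by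
  obtain ⟨s, hlen, hget⟩ := infix_get h
  rw [fam1_length] at hlen hget
  simp only [List.length_append, List.length_replicate, List.length_singleton] at hlen
  have h0 := hget 0 (by omega)
  have h1 := hget 1 (by omega)
  have h2 := hget 2 (by omega)
  have h3 := hget (m + 2) (by omega)
  rw [C1_get a n (s + 0) (by omega), fam1_get b m 0 (by omega)] at h0
  rw [C1_get a n (s + 1) (by omega), fam1_get b m 1 (by omega)] at h1
  rw [C1_get a n (s + 2) (by omega), fam1_get b m 2 (by omega)] at h2
  rw [C1_get a n (s + (m + 2)) (by omega), fam1_get b m (m + 2) (by omega)] at h3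
  simp only [Option.some.injEq] at h0 h1 h2 h3
  clear hget h
  cases a <;> cases b <;> simp only [Bool.not_false, Bool.not_true] at h0 h1 h2 h3 <;> split_ifs at h0 h1 h2 h3 <;> (try simp only [false_or, or_false, or_true, true_or, not_true, not_false_iff] at *) <;> first | omega | simp_all only [Bool.false_eq_true, Bool.true_eq_false]

lemma noFam2C1 (a b : Bool) (m n : ℕ) (hm : 1 ≤ m) (hn : 1 ≤ n)
    (h : fam2 b m <:+: [a] ++ List.replicate n (!a) ++ [a]) : False := by
  obtain ⟨s, hlen, hget⟩ := infix_get h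
  rw [fam2_length] at hlen hget
  simp only [List.length_append, List.length_replicate, List.length_singleton] at hlen
  have h0 := hget 0 (by omega)
  have h1 := hget 1 (by omega)
  have h2 := hget (m + 1) (by omega)
  have h3 := hget (m + 2) (by omega)
  rw [C1_get a n (s + 0) (by omega), fam2_get b m 0 (by omega)] at h0
  rw [C1_get a n (s + 1) (by omega), fam2_get b m 1 (by omega)] at h1
  rw [C1_get a n (s + (m + 1)) (by omega), fam2_get b m (m + 1) (by omega)] at h2
  rw [C1_get a n (s + (m + 2)) (by omega), fam2_get b m (m + 2) (by omega)] at h3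
  simp only [Option.some.injEq] at h0 h1 h2 h3
  clear hget h
  cases a <;> cases b <;> simp only [Bool.not_false, Bool.not_true] at h0 h1 h2 h3 <;> split_ifs at h0 h1 h2 h3 <;> (try simp only [false_or, or_false, or_true, true_or, not_true, not_false_iff] at *) <;> first | omega | simp_all only [Bool.false_eq_true, Bool.true_eq_false]

lemma noFam1C2 (a b : Bool) (m n : ℕ) (hm : 1 ≤ m) (hn : 1 ≤ n)
    (h : fam1 b m <:+: [a, a] ++ List.replicate n (!a)) : False := by
  obtain ⟨s, hlen, hget⟩ := infix_get h
  rw [fam1_length] at hlen hget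
  simp only [List.length_append, List.length_replicate, List.length_cons,
    List.length_singleton, List.length_nil] at hlen
  have h0 := hget 0 (by omega)
  have h1 := hget 1 (by omega)
  have h2 := hget 2 (by omega)
  have h3 := hget (m + 2) (by omega)
  rw [C2_get a n (s + 0) (by omega), fam1_get b m 0 (by omega)] at h0
  rw [C2_get a n (s + 1) (by omega), fam1_get b m 1 (by omega)] at h1
  rw [C2_get a n (s + 2) (by omega), fam1_get b m 2 (by omega)] at h2
  rw [C2_get a n (s + (m + 2)) (by omega), fam1_get b m (m + 2) (by omega)] at h3
  simp only [Option.some.injEq] at h0 h1 h2 h3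
  clear hget h
  cases a <;> cases b <;> simp only [Bool.not_false, Bool.not_true] at h0 h1 h2 h3 <;> split_ifs at h0 h1 h2 h3 <;> (try simp only [false_or, or_false, or_true, true_or, not_true, not_false_iff] at *) <;> first | omega | simp_all only [Bool.false_eq_true, Bool.true_eq_false]

lemma noFam2C2 (a b : Bool) (m n : ℕ) (hm : 1 ≤ m) (hn : 1 ≤ n)
    (h : fam2 b m <:+: [a, a] ++ List.replicate n (!a)) : False := by
  obtain ⟨s, hlen, hget⟩ := infix_get h
  rw [fam2_length] at hlen hget
  simp only [List.length_append, List.length_replicate, List.length_cons,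
    List.length_singleton, List.length_nil] at hlen
  have h0 := hget 0 (by omega)
  have h1 := hget 1 (by omega)
  have h2 := hget (m + 1) (by omega)
  rw [C2_get a n (s + 0) (by omega), fam2_get b m 0 (by omega)] at h0
  rw [C2_get a n (s + 1) (by omega), fam2_get b m 1 (by omega)] at h1
  rw [C2_get a n (s + (m + 1)) (by omega), fam2_get b m (m + 1) (by omega)] at h2
  simp only [Option.some.injEq] at h0 h1 h2
  clear hget h
  cases a <;> cases b <;> simp only [Bool.not_false, Bool.not_true] at h0 h1 h2 <;> split_ifs at h0 h1 h2 <;> (try simp only [false_or, or_false, or_true, true_or, not_true, not_false_iff] at *) <;> first | omega | simp_all only [Bool.false_eq_true, Bool.true_eq_false]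

lemma noFam1C3 (a b : Bool) (m n : ℕ) (hm : 1 ≤ m) (hn : 1 ≤ n)
    (h : fam1 b m <:+: List.replicate n (!a) ++ [a, a]) : False := by
  obtain ⟨s, hlen, hget⟩ := infix_get h
  rw [fam1_length] at hlen hget
  simp only [List.length_append, List.length_replicate, List.length_cons,
    List.length_singleton, List.length_nil] at hlen
  have h0 := hget 0 (by omega)
  have h1 := hget 1 (by omega)
  have h2 := hget 2 (by omega)
  have h3 := hget (m + 2) (by omega)
  rw [C3_get a n (s + 0) (by omega), fam1_get b m 0 (by omega)] at h0
  rw [C3_get a n (s + 1) (by omega), fam1_get b m 1 (by omega)] at h1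
  rw [C3_get a n (s + 2) (by omega), fam1_get b m 2 (by omega)] at h2
  rw [C3_get a n (s + (m + 2)) (by omega), fam1_get b m (m + 2) (by omega)] at h3
  simp only [Option.some.injEq] at h0 h1 h2 h3
  clear hget h
  cases a <;> cases b <;> simp only [Bool.not_false, Bool.not_true] at h0 h1 h2 h3 <;> split_ifs at h0 h1 h2 h3 <;> (try simp only [false_or, or_false, or_true, true_or, not_true, not_false_iff] at *) <;> first | omega | simp_all only [Bool.false_eq_true, Bool.true_eq_false]

lemma noFam2C3 (a b : Bool) (m n : ℕ) (hm : 1 ≤ m) (hn : 1 ≤ n)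
    (h : fam2 b m <:+: List.replicate n (!a) ++ [a, a]) : False := by
  obtain ⟨s, hlen, hget⟩ := infix_get h
  rw [fam2_length] at hlen hget
  simp only [List.length_append, List.length_replicate, List.length_cons,
    List.length_singleton, List.length_nil] at hlen
  have h0 := hget 0 (by omega)
  have h1 := hget 1 (by omega)
  have h2 := hget (m + 1) (by omega)
  rw [C3_get a n (s + 0) (by omega), fam2_get b m 0 (by omega)] at h0
  rw [C3_get a n (s + 1) (by omega), fam2_get b m 1 (by omega)] at h1
  rw [C3_get a n (s + (m + 1)) (by omega), fam2_get b m (m + 1) (by omega)] at h2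
  simp only [Option.some.injEq] at h0 h1 h2
  clear hget h
  cases a <;> cases b <;> simp only [Bool.not_false, Bool.not_true] at h0 h1 h2 <;> split_ifs at h0 h1 h2 <;> (try simp only [false_or, or_false, or_true, true_or, not_true, not_false_iff] at *) <;> first | omega | simp_all only [Bool.false_eq_true, Bool.true_eq_false]

lemma lp_ext' {s : List Bool} (p q : List Bool) {w : List Bool} (hw : p ++ s ++ q = w)
    (hs : s ∈ Lp) : w ∈ Lp := hw ▸ lp_ext p q hs

lemma fam1_proper (a : Bool) (m : ℕ) (hm : 1 ≤ m) :
    ∀ s p q : List Bool, fam1 a m = p ++ s ++ q → s ≠ fam1 a m → s ∉ Lp := by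
  intro s p q heq hne hs
  cases p with
  | nil =>
    rcases List.eq_nil_or_concat q with rfl | ⟨q', c, rfl⟩
    · simp only [List.nil_append, List.append_nil] at heq
      exact hne heq.symm
    · have heq2 : ([a, a] ++ List.replicate m (!a)) ++ [a] = (s ++ q') ++ [c] := by
        simpa [fam1, List.concat_eq_append, List.append_assoc] using heq
      have hdl := congrArg List.dropLast heq2
      rw [List.dropLast_concat, List.dropLast_concat] at hdl
      have hC : [a, a] ++ List.replicate m (!a) ∈ Lp :=
        lp_ext' [] q' (by simpa using hdl.symm) hs
      obtain ⟨b, m', hm', hf | hf⟩ := lp_bad hC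
      · exact noFam1C2 a b m' m hm' hm hf
      · exact noFam2C2 a b m' m hm' hm hf
  | cons c p' =>
    have heq2 : a :: ([a] ++ List.replicate m (!a) ++ [a]) = c :: (p' ++ s ++ q) := by
      simpa [fam1, List.append_assoc] using heq
    injection heq2 with h1 htl
    have hC : [a] ++ List.replicate m (!a) ++ [a] ∈ Lp := lp_ext' p' q htl.symm hs
    obtain ⟨b, m', hm', hf | hf⟩ := lp_bad hC
    · exact noFam1C1 a b m' m hm' hm hf
    · exact noFam2C1 a b m' m hm' hm hf

lemma fam2_proper (a : Bool) (m : ℕ) (hm : 1 ≤ m) :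
    ∀ s p q : List Bool, fam2 a m = p ++ s ++ q → s ≠ fam2 a m → s ∉ Lp := by
  intro s p q heq hne hs
  cases p with
  | nil =>
    rcases List.eq_nil_or_concat q with rfl | ⟨q', c, rfl⟩
    · simp only [List.nil_append, List.append_nil] at heq
      exact hne heq.symm
    · have heq2 : ([a] ++ List.replicate m (!a) ++ [a]) ++ [a] = (s ++ q') ++ [c] := by
        simpa [fam2, List.concat_eq_append, List.append_assoc] using heq
      have hdl := congrArg List.dropLast heq2
      rw [List.dropLast_concat, List.dropLast_concat] at hdl
      have hC : [a] ++ List.replicate m (!a) ++ [a] ∈ Lp :=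
        lp_ext' [] q' (by simpa using hdl.symm) hs
      obtain ⟨b, m', hm', hf | hf⟩ := lp_bad hC
      · exact noFam1C1 a b m' m hm' hm hf
      · exact noFam2C1 a b m' m hm' hm hf
  | cons c p' =>
    have heq2 : a :: (List.replicate m (!a) ++ [a, a]) = c :: (p' ++ s ++ q) := by
      simpa [fam2, List.append_assoc] using heq
    injection heq2 with h1 htl
    have hC : List.replicate m (!a) ++ [a, a] ∈ Lp := lp_ext' p' q htl.symm hs
    obtain ⟨b, m', hm', hf | hf⟩ := lp_bad hC
    · exact noFam1C3 a b m' m hm' hm hf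
    · exact noFam2C3 a b m' m hm' hm hf

lemma fam1_MFW (a : Bool) (m : ℕ) (hm : 1 ≤ m) : fam1 a m ∈ MFW (Lpᶜ) :=
  ⟨fun h => h (fam1_mem a m hm), fam1_proper a m hm⟩

lemma fam2_MFW (a : Bool) (m : ℕ) (hm : 1 ≤ m) : fam2 a m ∈ MFW (Lpᶜ) :=
  ⟨fun h => h (fam2_mem a m hm), fam2_proper a m hm⟩

/-- Over Σ = {0,1} (false = 0, true = 1), the minimal forbidden words of
L = Σ* \ L' are 001⁺0 + 01⁺00 + 110⁺1 + 10⁺11. -/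
theorem stmt_6 :
    MFW ((Lp : Set (List Bool))ᶜ) =
      {r | ∃ n ≥ 1, r = [false, false] ++ List.replicate n true ++ [false]} ∪
      {r | ∃ n ≥ 1, r = [false] ++ List.replicate n true ++ [false, false]} ∪
      {r | ∃ n ≥ 1, r = [true, true] ++ List.replicate n false ++ [true]} ∪
      {r | ∃ n ≥ 1, r = [true] ++ List.replicate n false ++ [true, true]} := by
  ext r
  constructor
  · rintro ⟨hr, hmin⟩
    have hlp : r ∈ Lp := not_not.mp hr
    obtain ⟨c, m, hm, hfam⟩ := lp_bad hlp
    rcases hfam with h | h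
    · obtain ⟨p, q, hpq⟩ := h
      have heq : fam1 c m = r := by
        by_contra hne
        exact hmin (fam1 c m) p q hpq.symm hne (fam1_mem c m hm)
      rw [← heq]
      cases c
      · exact Or.inl (Or.inl (Or.inl ⟨m, hm, by simp [fam1]⟩))
      · exact Or.inl (Or.inr ⟨m, hm, by simp [fam1]⟩)
    · obtain ⟨p, q, hpq⟩ := h
      have heq : fam2 c m = r := by
        by_contra hne
        exact hmin (fam2 c m) p q hpq.symm hne (fam2_mem c m hm)
      rw [← heq]
      cases c
      · exact Or.inl (Or.inl (Or.inr ⟨m, hm, by simp [fam2]⟩))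
      · exact Or.inr ⟨m, hm, by simp [fam2]⟩
  · rintro ((((⟨n, hn, rfl⟩ | ⟨n, hn, rfl⟩) | ⟨n, hn, rfl⟩) | ⟨n, hn, rfl⟩))
    · have e : [false, false] ++ List.replicate n true ++ [false] = fam1 false n := by
        simp [fam1]
      rw [e]; exact fam1_MFW false n hn
    · have e : [false] ++ List.replicate n true ++ [false, false] = fam2 false n := by
        simp [fam2]
      rw [e]; exact fam2_MFW false n hn
    · have e : [true, true] ++ List.replicate n false ++ [true] = fam1 true n := by
        simp [fam1]
      rw [e]; exact fam1_MFW true n hn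
    · have e : [true] ++ List.replicate n false ++ [true, true] = fam2 true n := by
        simp [fam2]
      rw [e]; exact fam2_MFW true n hn
end

section
/- An Eulerian trail t of a digraph G with fixed initial vertex is unique (i.e., G has exactly one Eulerian trail starting at that vertex) if and only if t admits no proper transposition, i.e., t cannot be written as u·a·x·b·z·a·y·b·v (allowing the degenerate case a = b, t = u·a·x·a·y·a·v) with the letters immediately following the two displayed occurrences of a being distinct. -/
/-! A transposition only permutes the edges of a trail, so a proper one yields a second trail
with the same initial vertex. Conversely, two distinct such trails agree up to a visit of some
vertex `a` and then leave it along different edges `(a, d)` and `(a, c)`. The first trail uses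
`(a, c)` later, after a closed walk `a X a`. If `a X` meets the part of the first trail after
`c`, this is a proper transposition; otherwise the second trail would have to traverse the closed
walk without ever being able to enter it. -/

namespace EulerTrail

variable {V : Type*}

def edges (l : List V) : Multiset (V × V) := l.consecutivePairs

@[simp] lemma edges_nil : edges ([] : List V) = 0 := rfl

@[simp] lemma edges_singleton (a : V) : edges [a] = 0 := rfl

@[simp] lemma edges_cons_cons (a b : V) (l : List V) :
    edges (a :: b :: l) = (a, b) ::ₘ edges (b :: l) := rfl

lemma edges_append_cons (p : List V) (a : V) (q : List V) :
    edges (p ++ a :: q) = edges (p ++ [a]) + edges (a :: q) := by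
  induction p with
  | nil => simp
  | cons c p ih =>
    cases p with
    | nil => simp
    | cons d p => simpa [Multiset.cons_add] using ih

lemma edges_cons_append_cons (a : V) (x : List V) (b : V) (r : List V) :
    edges (a :: (x ++ b :: r)) = edges (a :: (x ++ [b])) + edges (b :: r) :=
  edges_append_cons (a :: x) b r

lemma edges_transposition_pattern (a : V) (x : List V) (b : V) (z : List V) (c : V) (y : List V)
    (d : V) (v : List V) :
    edges (a :: (x ++ b :: (z ++ c :: (y ++ d :: v)))) =
      edges (a :: (x ++ [b])) + edges (b :: (z ++ [c])) + edges (c :: (y ++ [d])) +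
        edges (d :: v) := by
  rw [edges_cons_append_cons a x b (z ++ c :: (y ++ d :: v)),
    edges_cons_append_cons b z c (y ++ d :: v), edges_cons_append_cons c y d v]
  abel

lemma edges_transposition_pattern_of_eq (a : V) (x y v : List V) :
    edges (a :: (x ++ a :: (y ++ a :: v))) =
      edges (a :: (x ++ [a])) + edges (a :: (y ++ [a])) + edges (a :: v) := by
  rw [edges_cons_append_cons a x a (y ++ a :: v), edges_cons_append_cons a y a v, add_assoc]

lemma card_edges_cons (a : V) (l : List V) : Multiset.card (edges (a :: l)) = l.length := by
  simp [edges]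

lemma fst_mem_of_mem_edges {l : List V} {p q : V} (h : (p, q) ∈ edges l) : p ∈ l :=
  (List.of_mem_zip h).1

lemma snd_mem_of_mem_edges {l : List V} {p q : V} (h : (p, q) ∈ edges l) : q ∈ l :=
  List.mem_of_mem_tail (List.of_mem_zip h).2

lemma exists_eq_append_of_mem_edges {p q : V} :
    ∀ {l : List V}, (p, q) ∈ edges l → ∃ x y, l = x ++ p :: q :: y
  | [], h | [_], h => by simp at h
  | c :: d :: l, h => by
    rw [edges_cons_cons, Multiset.mem_cons, Prod.mk.injEq] at h
    rcases h with ⟨rfl, rfl⟩ | h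
    · exact ⟨[], l, rfl⟩
    · obtain ⟨x, y, hxy⟩ := exists_eq_append_of_mem_edges h
      exact ⟨c :: x, y, by simp [hxy]⟩

lemma exists_mem_edges_entering (P : V → Prop) {c v : V} {l : List V} (hc : ¬ P c)
    (hv : v ∈ c :: l) (hPv : P v) : ∃ p q, (p, q) ∈ edges (c :: l) ∧ ¬ P p ∧ P q := by
  induction l generalizing c with
  | nil => exact absurd (List.mem_singleton.1 hv ▸ hPv) hc
  | cons d l ih =>
    by_cases hd : P d
    · exact ⟨c, d, by simp, hc, hd⟩
    · have hv' : v ∈ d :: l := (List.mem_cons.1 hv).resolve_left (by rintro rfl; exact hc hPv)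
      obtain ⟨p, q, hpq, hp, hq⟩ := ih hd hv'
      exact ⟨p, q, by simp [hpq], hp, hq⟩

lemma exists_eq_append_cons_of_head?_eq :
    ∀ {s t : List V}, s.head? = t.head? → s ≠ t →
      ∃ w a p q, t = w ++ a :: p ∧ s = w ++ a :: q ∧ p.head? ≠ q.head?
  | [], [], _, hne => absurd rfl hne
  | [], _ :: _, h, _ | _ :: _, [], h, _ => by simp at h
  | c :: s, d :: t, h, hne => by
    obtain rfl : c = d := by simpa using h
    by_cases hst : s.head? = t.head?
    · obtain ⟨w, a, p, q, rfl, rfl, hpq⟩ :=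
        exists_eq_append_cons_of_head?_eq hst (fun h => hne (by rw [h]))
      exact ⟨c :: w, a, p, q, rfl, rfl, hpq⟩
    · exact ⟨[], c, t, s, rfl, rfl, Ne.symm hst⟩

/-- `t` can leave the vertex `a` at some visit along two different edges and still
traverse the same edges afterwards. -/
def Reroutable (t : List V) : Prop :=
  ∃ (u : List V) (a : V) (p q : List V),
    t = u ++ a :: p ∧ edges (a :: p) = edges (a :: q) ∧ p.head? ≠ q.head?

def HasProperTransposition (t : List V) : Prop :=
  ∃ (a b : V) (u v x y z : List V),
    ((t = u ++ [a] ++ x ++ [b] ++ z ++ [a] ++ y ++ [b] ++ v) ∨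
      (a = b ∧ z = [] ∧ t = u ++ [a] ++ x ++ [a] ++ y ++ [a] ++ v)) ∧
    (x ++ [b]).head? ≠ (y ++ [b]).head?

lemma reroutable_of_ne {s t : List V} (hhead : s.head? = t.head?) (hedges : edges s = edges t)
    (hne : s ≠ t) : Reroutable t := by
  obtain ⟨w, a, p, q, rfl, rfl, hpq⟩ := exists_eq_append_cons_of_head?_eq hhead hne
  rw [edges_append_cons w a q, edges_append_cons w a p] at hedges
  exact ⟨w, a, p, q, rfl, (add_left_cancel hedges).symm, hpq⟩

lemma Reroutable.exists_ne {t : List V} (ht : Reroutable t) :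
    ∃ s, s ≠ [] ∧ s.head? = t.head? ∧ edges s = edges t ∧ s ≠ t := by
  obtain ⟨u, a, p, q, rfl, hpq, hne⟩ := ht
  refine ⟨u ++ a :: q, by simp, by cases u <;> rfl, ?_, ?_⟩
  · rw [edges_append_cons u a q, edges_append_cons u a p, hpq]
  · intro h
    exact hne (congrArg List.head? (List.cons_injective (List.append_cancel_left h))).symm

lemma HasProperTransposition.reroutable {t : List V} (ht : HasProperTransposition t) :
    Reroutable t := by
  obtain ⟨a, b, u, v, x, y, z, ht | ⟨rfl, rfl, ht⟩, hne⟩ := ht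
  · refine ⟨u, a, x ++ b :: (z ++ a :: (y ++ b :: v)), y ++ b :: (z ++ a :: (x ++ b :: v)),
      by simp [ht], ?_, by simpa using hne⟩
    rw [edges_transposition_pattern, edges_transposition_pattern]
    abel
  · refine ⟨u, a, x ++ a :: (y ++ a :: v), y ++ a :: (x ++ a :: v),
      by simp [ht], ?_, by simpa using hne⟩
    rw [edges_transposition_pattern_of_eq, edges_transposition_pattern_of_eq]
    abel

lemma HasProperTransposition.append_left (w : List V) {t : List V}
    (ht : HasProperTransposition t) : HasProperTransposition (w ++ t) := by
  obtain ⟨a, b, u, v, x, y, z, ht, hne⟩ := ht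
  refine ⟨a, b, w ++ u, v, x, y, z, ?_, hne⟩
  rcases ht with rfl | ⟨rfl, rfl, rfl⟩
  · simp
  · simp

/-- The walk `c :: s` would have to enter the closed walk `a :: X ++ [a]` from outside,
but every edge of the right-hand side that ends in `a :: X` starts in it. -/
lemma edges_ne_add_of_disjoint {a c : V} {X R s : List V} (hdisj : ∀ b ∈ a :: X, b ∉ c :: R) :
    edges (c :: s) ≠ edges (a :: (X ++ [a])) + edges (c :: R) := by
  intro h
  have hc : c ∉ a :: X := fun hc => hdisj c hc List.mem_cons_self
  obtain ⟨e, r, her⟩ := List.exists_cons_of_ne_nil (List.concat_ne_nil a X)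
  have hae : (a, e) ∈ edges (c :: s) := by
    rw [h, her]
    simp
  obtain ⟨p, q, hpq, hp, hq⟩ :=
    exists_mem_edges_entering (· ∈ a :: X) hc (fst_mem_of_mem_edges hae) List.mem_cons_self
  rw [h, Multiset.mem_add] at hpq
  rcases hpq with hpq | hpq
  · have := fst_mem_of_mem_edges hpq
    simp only [List.mem_cons, List.mem_append] at this hp
    tauto
  · exact hdisj q hq (snd_mem_of_mem_edges hpq)

lemma hasProperTransposition_of_edges_eq {a c d : V} {s t : List V}
    (hedges : edges (a :: c :: s) = edges (a :: d :: t)) (hcd : c ≠ d) :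
    HasProperTransposition (a :: d :: t) := by
  have hac : (a, c) ∈ edges (d :: t) := by
    have : (a, c) ∈ edges (a :: d :: t) := hedges ▸ by simp
    simpa [hcd] using this
  obtain ⟨X, R, hX⟩ := exists_eq_append_of_mem_edges hac
  by_cases hshared : ∃ b ∈ a :: X, b ∈ c :: R
  · obtain ⟨b, hbX, hbR⟩ := hshared
    obtain ⟨y, v, hR⟩ := List.append_of_mem hbR
    have hy : (y ++ [b]).head? = some c := by simpa using (congrArg List.head? hR).symm
    rcases List.mem_cons.1 hbX with rfl | hbX
    · have hx : (X ++ [b]).head? = some d := by simpa using (congrArg List.head? hX).symm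
      exact ⟨b, b, [], v, X, y, [], Or.inr ⟨rfl, rfl, by simp [hX, hR]⟩, by simp [hx, hy, hcd.symm]⟩
    · obtain ⟨x, z, rfl⟩ := List.append_of_mem hbX
      have hx : (x ++ [b]).head? = some d := by simpa using (congrArg List.head? hX).symm
      exact ⟨a, b, [], v, x, y, z, Or.inl (by simp [hX, hR]), by simp [hx, hy, hcd.symm]⟩
  · push Not at hshared
    refine absurd ?_ (edges_ne_add_of_disjoint (s := s) hshared)
    rw [← Multiset.cons_inj_right (a, c), ← edges_cons_cons, hedges, hX,
      edges_cons_append_cons, edges_cons_cons, Multiset.add_cons]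

lemma Reroutable.hasProperTransposition {t : List V} (ht : Reroutable t) :
    HasProperTransposition t := by
  obtain ⟨u, a, p, q, rfl, hpq, hne⟩ := ht
  have hlen : q.length = p.length := by
    rw [← card_edges_cons a, ← card_edges_cons a, hpq]
  match p, q, hne, hlen with
  | [], [], hne, _ => exact absurd rfl hne
  | d :: t, c :: s, hne, _ =>
    have hcd : c ≠ d := by simpa [eq_comm] using hne
    exact (hasProperTransposition_of_edges_eq hpq.symm hcd).append_left u

theorem unique_iff_not_hasProperTransposition (t : List V) :
    (∀ s, s ≠ [] → s.head? = t.head? → edges s = edges t → s = t) ↔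
      ¬ HasProperTransposition t := by
  refine ⟨fun huniq ht => ?_, fun hno s _ hhead hedges => ?_⟩
  · obtain ⟨s, hs, hhead, hedges, hne⟩ := ht.reroutable.exists_ne
    exact hne (huniq s hs hhead hedges)
  · by_contra hne
    exact hno (reroutable_of_ne hhead hedges hne).hasProperTransposition

end EulerTrail

/-- An Eulerian trail with fixed initial vertex is unique iff it admits no
proper transposition. -/
theorem stmt_11 {V : Type*} (E : Multiset (V × V)) (t : List V)
    (htrail : t ≠ [] ∧ (↑(t.zip t.tail) : Multiset (V × V)) = E) :
    (∀ s : List V, s ≠ [] → s.head? = t.head? →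
        (↑(s.zip s.tail) : Multiset (V × V)) = E → s = t) ↔
      ¬ ∃ (a b : V) (u v x y z : List V),
        ((t = u ++ [a] ++ x ++ [b] ++ z ++ [a] ++ y ++ [b] ++ v) ∨
          (a = b ∧ z = [] ∧ t = u ++ [a] ++ x ++ [a] ++ y ++ [a] ++ v)) ∧
        (x ++ [b]).head? ≠ (y ++ [b]).head? := by
  obtain ⟨-, rfl⟩ := htrail
  exact EulerTrail.unique_iff_not_hasProperTransposition t
end

section
/- Over the binary alphabet {0,1}, the word 0·0·1ⁿ·0 (n ≥ 1) is not in L, but all of its proper factors are in L, where L is the complement of L'. (Analogously for 0·1ⁿ·0·0, 1·1·0ⁿ·1, and 1·0ⁿ·1·1.) -/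
lemma anti1 (c : Bool) : ∀ x y : Bool, (x = c ∨ y = !c) → (y = c ∨ x = !c) → x = y := by
  cases c <;> decide
lemma anti2 (c : Bool) : ∀ x y : Bool, (x = !c ∨ y = c) → (y = !c ∨ x = c) → x = y := by
  cases c <;> decide

lemma pw1 (c : Bool) (n : ℕ) :
    (c :: c :: List.replicate n (!c)).Pairwise (fun x y => x = c ∨ y = !c) := by
  refine List.Pairwise.cons ?_ (List.Pairwise.cons ?_ ?_)
  · intro x hx; left; rfl
  · intro x hx; left; rfl
  · exact List.pairwise_replicate.mpr (Or.inr (Or.inr rfl))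

lemma pw3 (c : Bool) (n : ℕ) :
    (List.replicate n (!c) ++ [c, c]).Pairwise (fun x y => x = !c ∨ y = c) := by
  rw [List.pairwise_append]
  refine ⟨List.pairwise_replicate.mpr (Or.inr (Or.inl rfl)), ?_, ?_⟩
  · refine List.Pairwise.cons ?_ (List.pairwise_singleton _ _)
    intro x hx; right; exact List.mem_singleton.mp hx
  · intro x hx b hb; left; exact List.eq_of_mem_replicate hx

lemma pw2 (c : Bool) (n : ℕ) :
    (List.replicate n (!c) ++ [c]).Pairwise (fun x y => x = !c ∨ y = c) := by
  rw [List.pairwise_append]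
  refine ⟨List.pairwise_replicate.mpr (Or.inr (Or.inl rfl)), List.pairwise_singleton _ _, ?_⟩
  intro x hx b hb; left; exact List.eq_of_mem_replicate hx

lemma pairwise_not_mem {r : Bool → Bool → Prop}
    (hr : ∀ x y, r x y → r y x → x = y)
    {t : List Bool} (ht : t.Pairwise r) : t ∉ Lp := by
  rintro ⟨u, v, w, y, a, b, rfl, hb, hne⟩
  simp only [List.pairwise_append, List.pairwise_cons, List.mem_append, List.mem_cons,
    List.not_mem_nil, or_false, List.mem_singleton, and_true, true_and] at ht
  obtain ⟨⟨⟨⟨⟨-, -, hW⟩, -, hA2⟩, -, hY⟩, -, hB⟩, -⟩ := ht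
  have hw : ∀ x ∈ w, x = a := fun x hx =>
    hr x a (hA2 x (Or.inr hx) a rfl) (hW a (Or.inr rfl) x hx)
  have hba : b = a := by
    rcases List.mem_cons.mp hb with h | h
    · exact h
    · exact hw b h
  have hy : ∀ x ∈ y, x = a := by
    intro x hx
    have h1 : r a x := hY a (Or.inr rfl) x hx
    have h2 : r x b := hB x (Or.inr hx) b rfl
    rw [hba] at h2
    exact hr x a h2 h1
  have h1 : (w ++ [a]).head? = some a := by
    cases w with
    | nil => rfl
    | cons w₀ w' => simp [hw w₀ (by simp)]
  have h2 : (y ++ [b]).head? = some a := by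
    cases y with
    | nil => simp [hba]
    | cons y₀ y' => simp [hy y₀ (by simp)]
  exact hne (h1.trans h2.symm)

lemma bool_resolve {x c : Bool} (h : x ≠ c) : x = !c := by
  cases x <;> cases c <;> simp_all

lemma mid_not_mem (c : Bool) (k : ℕ) : (c :: (List.replicate k (!c) ++ [c])) ∉ Lp := by
  rintro ⟨u, v, w, y, a, b, heq, hb, hne⟩
  cases u with
  | cons u₀ u' =>
      have h2 : List.replicate k (!c) ++ [c] = u' ++ [a] ++ w ++ [a] ++ y ++ [b] ++ v := by
        have := congrArg List.tail heq
        simpa using this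
      exact pairwise_not_mem (anti2 c) (pw2 c k) ⟨u', v, w, y, a, b, h2, hb, hne⟩
  | nil =>
      simp only [List.nil_append, List.append_assoc, List.cons_append] at heq
      obtain ⟨rfl, heq2⟩ := List.cons_eq_cons.mp heq.symm
      have hc := congrArg (List.count a) heq2
      simp only [List.count_append, List.count_replicate, List.count_cons,
        Bool.not_beq_self, List.count_nil, Bool.false_eq_true, if_false, beq_self_eq_true, if_true] at hc
      have hbne : b ≠ a := by
        intro h; subst h; simp at hc; omega
      have hw0 : List.count a w = 0 ∧ List.count a y = 0 := by
        rw [if_neg (by simpa using hbne)] at hc; omega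
      have hwm : ∀ x ∈ w, x = !a := fun x hx =>
        bool_resolve (fun h => by subst h; exact absurd (List.count_eq_zero.mp hw0.1) (by simp [hx]))
      have hym : ∀ x ∈ y, x = !a := fun x hx =>
        bool_resolve (fun h => by subst h; exact absurd (List.count_eq_zero.mp hw0.2) (by simp [hx]))
      have hbw : b ∈ w := by
        rcases List.mem_cons.mp hb with h | h
        · exact absurd h hbne
        · exact h
      have hbv : b = !a := bool_resolve hbne
      obtain ⟨w₀, w', rfl⟩ : ∃ w₀ w', w = w₀ :: w' := by
        cases w with
        | nil => exact absurd hbw (by simp)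
        | cons w₀ w' => exact ⟨w₀, w', rfl⟩
      have h1 : ((w₀ :: w') ++ [a]).head? = some (!a) := by
        simp [hwm w₀ (by simp)]
      have h2 : (y ++ [b]).head? = some (!a) := by
        cases y with
        | nil => simp [hbv]
        | cons y₀ y' => simp [hym y₀ (by simp)]
      exact hne (h1.trans h2.symm)

lemma pw4 (c : Bool) (n : ℕ) :
    (c :: List.replicate n (!c)).Pairwise (fun x y => x = c ∨ y = !c) := by
  refine List.Pairwise.cons (fun x hx => Or.inl rfl) ?_
  exact List.pairwise_replicate.mpr (Or.inr (Or.inr rfl))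

lemma memA (c : Bool) (n : ℕ) (hn : 1 ≤ n) :
    ([c, c] ++ List.replicate n (!c) ++ [c]) ∈ Lp := by
  obtain ⟨m, rfl⟩ : ∃ m, n = m + 1 := ⟨n - 1, by omega⟩
  refine ⟨[], [], [], List.replicate (m + 1) (!c), c, c, by simp, by simp, ?_⟩
  cases c <;> simp [List.replicate_succ]

lemma memB (c : Bool) (n : ℕ) (hn : 1 ≤ n) :
    ([c] ++ List.replicate n (!c) ++ [c, c]) ∈ Lp := by
  obtain ⟨m, rfl⟩ : ∃ m, n = m + 1 := ⟨n - 1, by omega⟩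
  refine ⟨[], [], List.replicate (m + 1) (!c), [], c, c, by simp, by simp, ?_⟩
  cases c <;> simp [List.replicate_succ]

lemma factA (c : Bool) (n : ℕ) (s p q : List Bool)
    (heq : [c, c] ++ List.replicate n (!c) ++ [c] = p ++ s ++ q)
    (hs : s ≠ [c, c] ++ List.replicate n (!c) ++ [c]) : s ∉ Lp := by
  rcases q.eq_nil_or_concat with rfl | ⟨q', x, rfl⟩
  · rw [List.append_nil] at heq
    cases p with
    | nil =>
      rw [List.nil_append] at heq
      exact absurd heq.symm hs
    | cons p₀ p' =>
      have h1 : c :: List.replicate n (!c) ++ [c] = p' ++ s := by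
        have := congrArg List.tail heq
        simpa using this
      cases p' with
      | nil =>
        rw [List.nil_append] at h1
        rw [← h1]
        exact mid_not_mem c n
      | cons p₁ p'' =>
        have h2 : List.replicate n (!c) ++ [c] = p'' ++ s := by
          have := congrArg List.tail h1
          simpa using this
        exact pairwise_not_mem (anti2 c)
          (List.Pairwise.sublist (List.IsSuffix.sublist ⟨p'', h2.symm⟩) (pw2 c n))
  · have h1 : [c, c] ++ List.replicate n (!c) = p ++ s ++ q' := by
      have h := congrArg List.dropLast heq
      rw [show [c, c] ++ List.replicate n (!c) ++ [c] = ([c, c] ++ List.replicate n (!c)) ++ [c] by simp,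
        show p ++ s ++ q'.concat x = (p ++ s ++ q') ++ [x] by simp [List.concat_eq_append],
        List.dropLast_concat, List.dropLast_concat] at h
      exact h
    have hsub : s.Sublist (c :: c :: List.replicate n (!c)) := by
      have : s <:+: (c :: c :: List.replicate n (!c)) := ⟨p, q', by simpa using h1.symm⟩
      exact this.sublist
    exact pairwise_not_mem (anti1 c) (List.Pairwise.sublist hsub (pw1 c n))

lemma factB (c : Bool) (n : ℕ) (s p q : List Bool)
    (heq : [c] ++ List.replicate n (!c) ++ [c, c] = p ++ s ++ q)
    (hs : s ≠ [c] ++ List.replicate n (!c) ++ [c, c]) : s ∉ Lp := by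
  cases p with
  | cons p₀ p' =>
    have h1 : List.replicate n (!c) ++ [c, c] = p' ++ s ++ q := by
      have := congrArg List.tail heq
      simpa using this
    have hsub : s.Sublist (List.replicate n (!c) ++ [c, c]) :=
      (List.IsInfix.sublist ⟨p', q, by simpa using h1.symm⟩)
    exact pairwise_not_mem (anti2 c) (List.Pairwise.sublist hsub (pw3 c n))
  | nil =>
    rw [List.nil_append] at heq
    rcases q.eq_nil_or_concat with rfl | ⟨q', x, rfl⟩
    · rw [List.append_nil] at heq
      exact absurd heq.symm hs
    · have h1 : [c] ++ List.replicate n (!c) ++ [c] = s ++ q' := by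
        have h := congrArg List.dropLast heq
        rw [show [c] ++ List.replicate n (!c) ++ [c, c] = ([c] ++ List.replicate n (!c) ++ [c]) ++ [c] by simp,
          show s ++ q'.concat x = (s ++ q') ++ [x] by simp [List.concat_eq_append],
          List.dropLast_concat, List.dropLast_concat] at h
        exact h
      rcases q'.eq_nil_or_concat with rfl | ⟨q'', x', rfl⟩
      · rw [List.append_nil] at h1
        rw [← h1]
        exact mid_not_mem c n
      · have h2 : [c] ++ List.replicate n (!c) = s ++ q'' := by
          have h := congrArg List.dropLast h1
          rw [show [c] ++ List.replicate n (!c) ++ [c] = ([c] ++ List.replicate n (!c)) ++ [c] by simp,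
            show s ++ q''.concat x' = (s ++ q'') ++ [x'] by simp [List.concat_eq_append],
            List.dropLast_concat, List.dropLast_concat] at h
          exact h
        have hsub : s.Sublist (c :: List.replicate n (!c)) :=
          (List.IsPrefix.sublist ⟨q'', by simpa using h2.symm⟩)
        exact pairwise_not_mem (anti1 c) (List.Pairwise.sublist hsub (pw4 c n))

/-- Over {0,1} (false = 0, true = 1): for n ≥ 1, each of the words
001ⁿ0, 01ⁿ00, 110ⁿ1, 10ⁿ11 is not in L = Σ* \ L', while all its proper
factors are in L. -/
theorem stmt_16 (n : ℕ) (hn : 1 ≤ n) :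
    (∀ r : List Bool,
        (r = [false, false] ++ List.replicate n true ++ [false] ∨
         r = [false] ++ List.replicate n true ++ [false, false] ∨
         r = [true, true] ++ List.replicate n false ++ [true] ∨
         r = [true] ++ List.replicate n false ++ [true, true]) →
      r ∈ (Lp : Set (List Bool)) ∧
        ∀ s p q : List Bool, r = p ++ s ++ q → s ≠ r →
          s ∉ (Lp : Set (List Bool))) := by
  intro r hr
  rcases hr with rfl | rfl | rfl | rfl
  · exact ⟨memA false n hn, fun s p q h hs => factA false n s p q h hs⟩
  · exact ⟨memB false n hn, fun s p q h hs => factB false n s p q h hs⟩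
  · exact ⟨memA true n hn, fun s p q h hs => factA true n s p q h hs⟩
  · exact ⟨memB true n hn, fun s p q h hs => factB true n s p q h hs⟩
end

section
/- For every n ≥ 0, the word (ab)ⁿ over a two-letter alphabet {a,b} with a ≠ b belongs to L, i.e., (ab)ⁿ ∉ L'. -/
theorem rep_get {α : Type*} (a b : α) :
    ∀ n i, i < 2 * n →
      ((List.replicate n [a, b]).flatten)[i]? = some (if i % 2 = 0 then a else b) := by
  intro n
  induction n with
  | zero => intro i h; omega
  | succ m ih =>
      intro i h
      rw [List.replicate_succ, List.flatten_cons]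
      match i with
      | 0 => simp
      | 1 => simp
      | (k+2) =>
          have : ([a, b] ++ (List.replicate m [a, b]).flatten)[k+2]?
              = ((List.replicate m [a, b]).flatten)[k]? := by
            rw [List.getElem?_append_right (by simp)]
            simp
          rw [this, ih k (by omega)]
          congr 1
          have : (k + 2) % 2 = k % 2 := by omega
          rw [this]

theorem rep_len {α : Type*} (a b : α) (n : ℕ) :
    ((List.replicate n [a, b]).flatten).length = 2 * n := by
  induction n with
  | zero => simp
  | succ m ih => rw [List.replicate_succ, List.flatten_cons]; simp_all; omega

/-- For every n ≥ 0, the word (ab)ⁿ belongs to L, i.e. (ab)ⁿ ∉ L'. -/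
theorem stmt_17 {α : Type*} (a b : α) (hab : a ≠ b) (n : ℕ) :
    (List.replicate n [a, b]).flatten ∉ (Lp : Set (List α)) := by
  rintro ⟨u, v, w, y, c, d, ht, hd, hne⟩
  set t := (List.replicate n [a, b]).flatten with htdef
  set i := u.length with hi
  set j := u.length + 1 + w.length with hj
  have hlen : 2 * n = u.length + 1 + w.length + 1 + y.length + 1 + v.length := by
    have := congrArg List.length ht
    rw [rep_len] at this
    simp at this
    omega
  -- h1 : t[i]? = some c
  have ht1 : t = u ++ ([c] ++ (w ++ [c] ++ y ++ [d] ++ v)) := by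
    rw [ht]; simp
  have h1 : t[i]? = some c := by
    rw [ht1, List.getElem?_append_right (le_refl _)]
    simp
  have h2 : t[i+1]? = (w ++ [c]).head? := by
    rw [ht1, List.getElem?_append_right (by omega)]
    rw [show u.length + 1 - u.length = 1 from by omega]
    simp [List.getElem?_append, List.head?_eq_getElem?]
    rcases w with _ | ⟨x, w'⟩ <;> simp
  have ht2 : t = (u ++ [c] ++ w) ++ ([c] ++ ((y ++ [d]) ++ v)) := by
    rw [ht]; simp
  have hpre : (u ++ [c] ++ w).length = j := by simp [hj]; omega
  have h3 : t[j]? = some c := by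
    rw [ht2, ← hpre, List.getElem?_append_right (le_refl _)]
    simp
  have h4 : t[j+1]? = (y ++ [d]).head? := by
    rw [ht2, ← hpre, List.getElem?_append_right (by omega)]
    rw [show (u ++ [c] ++ w).length + 1 - (u ++ [c] ++ w).length = 1 from by omega]
    simp [List.getElem?_append, List.head?_eq_getElem?]
    rcases y with _ | ⟨x, y'⟩ <;> simp
  have hi1 : i + 1 < 2 * n := by omega
  have hj1 : j + 1 < 2 * n := by omega
  have k1 := rep_get a b n i (by omega)
  have k3 := rep_get a b n j (by omega)
  rw [h1] at k1
  rw [h3] at k3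
  have hpar : i % 2 = j % 2 := by
    by_contra hp
    rcases Nat.mod_two_eq_zero_or_one i with h | h <;>
    rcases Nat.mod_two_eq_zero_or_one j with h' | h' <;>
      simp [h, h'] at k1 k3 hp <;> subst k1 <;> subst k3 <;> simp at hab
  have hpar1 : (i + 1) % 2 = (j + 1) % 2 := by omega
  have k2 := rep_get a b n (i+1) hi1
  have k4 := rep_get a b n (j+1) hj1
  rw [h2] at k2
  rw [h4] at k4
  rw [hpar1] at k2
  exact hne (k2.trans k4.symm)
end
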